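/- For every integer h > 1, T(2↑↑h, 3) ≥ h; that is, there is no one-sided colour reduction algorithm from 2↑↑h colours to 3 colours running in h − 1 rounds. -/

import Mathlib

/-- A one-sided colour reduction algorithm from `n` colours to `c` colours running in
`t` rounds: a function `B : [n]^(t+1) → [c]` such that for any sequence
`x_0, …, x_(t+1)` with `x_i ≠ x_(i+1)` for all `i`, the outputs on the two
overlapping windows differ. -/
def IsOneSided (n c t : ℕ) (B : (Fin (t + 1) → Fin n) → Fin c) : Prop :=
  ∀ x : Fin (t + 1 + 1) → Fin n,
    (∀ i : Fin (t + 1), x i.castSucc ≠ x i.succ) →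
      B (fun i => x i.castSucc) ≠ B (fun i => x i.succ)

/-- `T n c` is the least number of rounds of a one-sided colour reduction algorithm
from `n` colours to `c` colours. -/
noncomputable def T (n c : ℕ) : ℕ := sInf {t | ∃ B, IsOneSided n c t B}

/-- A two-sided colour reduction algorithm from `n` colours to `c` colours running in
`t` rounds: a function `A : [n]^(2t+1) → [c]` such that for any sequence
`x_0, …, x_(2t+1)` with `x_i ≠ x_(i+1)` for all `i`, the outputs on the two
overlapping windows differ. -/
def IsTwoSided (n c t : ℕ) (A : (Fin (2 * t + 1) → Fin n) → Fin c) : Prop :=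
  ∀ x : Fin (2 * t + 1 + 1) → Fin n,
    (∀ i : Fin (2 * t + 1), x i.castSucc ≠ x i.succ) →
      A (fun i => x i.castSucc) ≠ A (fun i => x i.succ)

/-- `C n c` is the least number of rounds of a two-sided colour reduction algorithm
from `n` colours to `c` colours. -/
noncomputable def C (n c : ℕ) : ℕ := sInf {t | ∃ A, IsTwoSided n c t A}

/-- Tetration (power tower) with base 2: `tpow 0 = 1`, `tpow (i+1) = 2 ^ tpow i`. -/
def tpow : ℕ → ℕ
  | 0 => 1
  | i + 1 => 2 ^ tpow i

/-- `logStar n` is the least `i` such that the `i`-fold iterated base-2 logarithm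
of `n` is at most `1`. -/
noncomputable def logStar (n : ℕ) : ℕ :=
  sInf {i | (fun x : ℝ => Real.logb 2 x)^[i] (n : ℝ) ≤ 1}

namespace Stmt17Aux

@[reducible] def V : ℕ → Type
  | 0 => Fin 3
  | i+1 => Finset (V i)

instance instDecEqV : (i : ℕ) → DecidableEq (V i)
  | 0 => inferInstanceAs (DecidableEq (Fin 3))
  | i+1 => letI := instDecEqV i; inferInstanceAs (DecidableEq (Finset (V i)))

instance instFintypeV : (i : ℕ) → Fintype (V i)
  | 0 => inferInstanceAs (Fintype (Fin 3))
  | i+1 =>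
    letI := instDecEqV i; letI := instFintypeV i
    inferInstanceAs (Fintype (Finset (V i)))

def subV : (i : ℕ) → V i → V i → Prop
  | 0 => fun a b => a = b
  | i+1 => fun (S T : Finset (V i)) => S ⊆ T

instance instDecSubV : (i : ℕ) → DecidableRel (subV i)
  | 0 => fun a b => inferInstanceAs (Decidable (a = b))
  | i+1 => fun (S T : Finset (V i)) => inferInstanceAs (Decidable (S ⊆ T))

lemma subV_refl : ∀ (i : ℕ) (a : V i), subV i a a
  | 0, _ => rfl
  | _+1, S => Finset.Subset.refl S

lemma subV_trans : ∀ (i : ℕ) {a b c : V i}, subV i a b → subV i b c → subV i a c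
  | 0, _, _, _, h1, h2 => Eq.trans h1 h2
  | _+1, _, _, _, h1, h2 => Finset.Subset.trans h1 h2

def NN : (i : ℕ) → Finset (V i)
  | 0 => Finset.univ
  | i+1 =>
    Finset.univ.filter fun S : Finset (V i) =>
      S ⊆ NN i ∧ S.Nonempty ∧ (∀ a ∈ S, ∀ b ∈ NN i, subV i b a → b ∈ S) ∧ S ≠ NN i

/-- adjacent entries distinct -/
def Adj {n l : ℕ} (x : Fin (l+1) → Fin n) : Prop :=
  ∀ i : Fin l, x i.castSucc ≠ x i.succ

def Good (n k i : ℕ) (B : (Fin (k+1) → Fin n) → V i) : Prop :=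
  ∀ x : Fin (k+1+1) → Fin n, Adj x → ¬ subV i (B (Fin.init x)) (B (Fin.tail x))

def Vals (n k i : ℕ) (B : (Fin (k+1) → Fin n) → V i) : Prop :=
  ∀ w : Fin (k+1) → Fin n, Adj w → B w ∈ NN i

/- Fin gymnastics -/

lemma tail_snoc {α : Type*} {m : ℕ} (x : Fin (m+1) → α) (y : α) :
    Fin.tail (Fin.snoc (α := fun _ => α) x y) =
      Fin.snoc (α := fun _ => α) (Fin.tail x) y := by
  funext i
  cases i using Fin.lastCases with
  | last =>
    have h1 : (Fin.last m).succ = Fin.last (m+1) := Fin.succ_last m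
    simp [Fin.tail, h1]
  | cast j =>
    simp [Fin.tail, Fin.succ_castSucc, -Fin.castSucc_succ]

lemma init_cons {α : Type*} {m : ℕ} (z : α) (x : Fin (m+1) → α) :
    Fin.init (Fin.cons (α := fun _ => α) z x) =
      Fin.cons (α := fun _ => α) z (Fin.init x) := by
  funext i
  cases i using Fin.cases with
  | zero => simp [Fin.init]
  | succ j =>
    simp [Fin.init, ← Fin.succ_castSucc]

lemma adj_snoc {n m : ℕ} {w : Fin (m+1) → Fin n} {y : Fin n}
    (hw : Adj w) (hy : y ≠ w (Fin.last m)) : Adj (Fin.snoc w y) := by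
  intro i
  cases i using Fin.lastCases with
  | last =>
    have h1 : (Fin.last m).succ = Fin.last (m+1) := Fin.succ_last m
    simpa [h1] using hy.symm
  | cast j =>
    simpa [Fin.succ_castSucc, -Fin.castSucc_succ] using hw j

lemma adj_cons {n m : ℕ} {w : Fin (m+1) → Fin n} {z : Fin n}
    (hw : Adj w) (hz : z ≠ w 0) : Adj (Fin.cons z w) := by
  intro i
  cases i using Fin.cases with
  | zero => simpa using hz
  | succ j =>
    simpa [← Fin.succ_castSucc] using hw j


lemma step {n k i : ℕ} (hn : 2 ≤ n) (B : (Fin (k+1+1) → Fin n) → V i)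
    (hG : Good n (k+1) i B) (hV : Vals n (k+1) i B) :
    ∃ B' : (Fin (k+1) → Fin n) → V (i+1), Good n k (i+1) B' ∧ Vals n k (i+1) B' := by
  haveI : Nontrivial (Fin n) := Fin.nontrivial_iff_two_le.mpr hn
  refine ⟨fun w => (NN i).filter
      (fun a => ∃ y : Fin n, y ≠ w (Fin.last k) ∧ subV i a (B (Fin.snoc w y))), ?_, ?_⟩
  · -- Good
    intro x hx hsub
    -- witness b₀ = B x
    have hb0 : B x ∈ (NN i).filter
        (fun a => ∃ y : Fin n, y ≠ (Fin.init x) (Fin.last k) ∧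
          subV i a (B (Fin.snoc (Fin.init x) y))) := by
      refine Finset.mem_filter.mpr ⟨hV x hx, ⟨x (Fin.last (k+1)), ?_, ?_⟩⟩
      · have h1 : (Fin.last k).succ = Fin.last (k+1) := Fin.succ_last k
        have := hx (Fin.last k)
        rw [h1] at this
        exact fun e => this (by simpa [Fin.init] using e.symm)
      · rw [Fin.snoc_init_self]
        exact subV_refl i (B x)
    have hb0' := hsub hb0
    rw [Finset.mem_filter] at hb0'
    obtain ⟨-, y, hy, hs⟩ := hb0'
    -- apply hG to snoc x y
    have hy' : y ≠ x (Fin.last (k+1)) := by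
      simpa [Fin.tail, Fin.succ_last] using hy
    have hadj : Adj (Fin.snoc x y) := adj_snoc hx hy'
    have := hG (Fin.snoc x y) hadj
    rw [Fin.init_snoc, tail_snoc] at this
    exact this hs
  · -- Vals
    intro w hw
    rw [NN, Finset.mem_filter]
    refine ⟨Finset.mem_univ _, Finset.filter_subset _ _, ?_, ?_, ?_⟩
    · -- nonempty
      obtain ⟨y, hy⟩ := exists_ne (w (Fin.last k))
      refine ⟨B (Fin.snoc w y), Finset.mem_filter.mpr ⟨hV _ (adj_snoc hw hy), y, hy, subV_refl i _⟩⟩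
    · -- down-closed
      intro a ha b hb hba
      rw [Finset.mem_filter] at ha ⊢
      obtain ⟨-, y, hy, hs⟩ := ha
      exact ⟨hb, y, hy, subV_trans i hba hs⟩
    · -- proper
      obtain ⟨z, hz⟩ := exists_ne (w 0)
      have hcz : B (Fin.cons z w) ∈ NN i := hV _ (adj_cons hw hz)
      intro he
      have hmem : B (Fin.cons z w) ∈ (NN i).filter
          (fun a => ∃ y : Fin n, y ≠ w (Fin.last k) ∧ subV i a (B (Fin.snoc w y))) :=
        (Finset.ext_iff.mp he (B (Fin.cons z w))).mpr hcz
      rw [Finset.mem_filter] at hmem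
      obtain ⟨-, y, hy, hs⟩ := hmem
      have hadj : Adj (Fin.cons z (Fin.snoc w y)) := by
        apply adj_cons (adj_snoc hw hy)
        have h0 : Fin.snoc (α := fun _ => Fin n) w y 0 = w 0 := by
          rw [show (0 : Fin (k+1+1)) = (0 : Fin (k+1)).castSucc from (Fin.castSucc_zero).symm,
            Fin.snoc_castSucc]
        simpa [h0] using hz
      have := hG (Fin.cons z (Fin.snoc w y)) hadj
      rw [init_cons, Fin.init_snoc, Fin.tail_cons] at this
      exact this hs


lemma main_red (k : ℕ) : ∀ (i n : ℕ) (B : (Fin (k+1) → Fin n) → V i), 2 ≤ n →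
    Good n k i B → Vals n k i B →
    ∃ B₀ : (Fin 1 → Fin n) → V (i+k), Good n 0 (i+k) B₀ ∧ Vals n 0 (i+k) B₀ := by
  induction k with
  | zero => intro i n B hn hG hV; exact ⟨B, hG, hV⟩
  | succ k ih =>
    intro i n B hn hG hV
    obtain ⟨B', hG', hV'⟩ := step hn B hG hV
    have e : (i+1) + k = i + (k+1) := by omega
    rw [← e]
    exact ih (i+1) n B' hn hG' hV'

lemma reduced {t n : ℕ} (hn : 2 ≤ n) (B : (Fin (t+1) → Fin n) → Fin 3)
    (hB : IsOneSided n 3 t B) :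
    ∃ B₀ : (Fin 1 → Fin n) → V t, Good n 0 t B₀ ∧ Vals n 0 t B₀ := by
  have hG : Good n t 0 B := fun x hx => hB x hx
  have hV : Vals n t 0 B := fun w _ => Finset.mem_univ _
  have h := main_red t 0 n B hn hG hV
  rwa [Nat.zero_add] at h

lemma pair_prop {n j : ℕ} {B₀ : (Fin 1 → Fin n) → V j} (hG : Good n 0 j B₀)
    {u v : Fin n} (huv : u ≠ v) : ¬ subV j (B₀ (fun _ => u)) (B₀ (fun _ => v)) := by
  set x : Fin 2 → Fin n := fun i => if i.val = 0 then u else v with hxdef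
  have hx : Adj x := by
    intro i
    have hi : i = 0 := Subsingleton.elim i 0
    subst hi
    simpa [hxdef] using huv
  have h := hG x hx
  have e1 : Fin.init x = (fun _ : Fin 1 => u) := by
    funext i
    have h0 : (i.castSucc : Fin 2).val = 0 := by
      simpa using Nat.lt_one_iff.mp i.isLt
    simp [Fin.init, hxdef, h0, Fin.fin_one_eq_zero i]
  have e2 : Fin.tail x = (fun _ : Fin 1 => v) := by
    funext i
    have : i.succ.val ≠ 0 := by simp
    simp [Fin.tail, hxdef, this]
  rwa [e1, e2] at h


/- ## Counting at levels 1 and 2 -/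

lemma mem_NN1 {S : V 1} (hS : S ∈ NN 1) : S.Nonempty ∧ S ≠ Finset.univ := by
  have h : S ∈ Finset.univ.filter (fun S : Finset (V 0) =>
      S ⊆ NN 0 ∧ S.Nonempty ∧ (∀ a ∈ S, ∀ b ∈ NN 0, subV 0 b a → b ∈ S) ∧ S ≠ NN 0) := hS
  rw [Finset.mem_filter] at h
  exact ⟨h.2.2.1, h.2.2.2.2⟩

set_option maxHeartbeats 1000000 in
set_option synthInstance.maxHeartbeats 1000000 in
set_option synthInstance.maxSize 2000 in
lemma bench1 : ∀ a b c d : Finset (Fin 3),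
    ¬ (a.Nonempty ∧ b.Nonempty ∧ c.Nonempty ∧ d.Nonempty ∧
    a ≠ Finset.univ ∧ b ≠ Finset.univ ∧ c ≠ Finset.univ ∧ d ≠ Finset.univ ∧
    ¬ a ⊆ b ∧ ¬ b ⊆ a ∧ ¬ a ⊆ c ∧ ¬ c ⊆ a ∧ ¬ a ⊆ d ∧ ¬ d ⊆ a ∧
    ¬ b ⊆ c ∧ ¬ c ⊆ b ∧ ¬ b ⊆ d ∧ ¬ d ⊆ b ∧ ¬ c ⊆ d ∧ ¬ d ⊆ c) := by decide

lemma no_t1 {n : ℕ} (hn : n = 4) (B₀ : (Fin 1 → Fin n) → V 1)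
    (hG : Good n 0 1 B₀) (hV : Vals n 0 1 B₀) : False := by
  subst hn
  set g : Fin 4 → V 1 := fun u => B₀ (fun _ => u) with hg
  have hmem : ∀ u, g u ∈ NN 1 := fun u => hV _ (fun i => i.elim0)
  have hpair : ∀ u v : Fin 4, u ≠ v → ¬ subV 1 (g u) (g v) :=
    fun u v huv => pair_prop hG huv
  have c := fun u => mem_NN1 (hmem u)
  exact bench1 (g 0) (g 1) (g 2) (g 3) ⟨(c 0).1, (c 1).1, (c 2).1, (c 3).1,
    (c 0).2, (c 1).2, (c 2).2, (c 3).2,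
    hpair 0 1 (by decide), hpair 1 0 (by decide), hpair 0 2 (by decide),
    hpair 2 0 (by decide), hpair 0 3 (by decide), hpair 3 0 (by decide),
    hpair 1 2 (by decide), hpair 2 1 (by decide), hpair 1 3 (by decide),
    hpair 3 1 (by decide), hpair 2 3 (by decide), hpair 3 2 (by decide)⟩

/- level-2 counting -/

def F16 : Finset (Finset (Fin 3) × Finset (Fin 3)) :=
  Finset.univ.filter (fun p =>
    (∀ x ∈ p.2, ∀ y, y ≠ x → y ∈ p.1) ∧ p.1.Nonempty ∧
      ¬(p.1 = Finset.univ ∧ p.2 = Finset.univ))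

set_option maxHeartbeats 1000000 in
lemma F16_card : F16.card = 16 := by decide

def AS (S : Finset (Finset (Fin 3))) : Finset (Fin 3) :=
  Finset.univ.filter (fun x => {x} ∈ S)

def DS (S : Finset (Finset (Fin 3))) : Finset (Fin 3) :=
  Finset.univ.filter (fun x => {x}ᶜ ∈ S)

lemma L1 : ∀ y : Fin 3, ({y} : Finset (Fin 3)) ∈ NN 1 := by decide

lemma L3 : ∀ x y : Fin 3, y ≠ x → ({y} : Finset (Fin 3)) ⊆ {x}ᶜ := by decide

lemma L4 : ∀ a ∈ NN 1, ∃ y : Fin 3, ({y} : Finset (Fin 3)) ⊆ a := by decide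

lemma L5 : ∀ b ∈ NN 1, (∃ x : Fin 3, b = ({x} : Finset (Fin 3))) ∨
    (∃ x : Fin 3, b = ({x}ᶜ : Finset (Fin 3))) := by decide

lemma mem_NN2 {S : V 2} (hS : S ∈ NN 2) :
    S ⊆ NN 1 ∧ S.Nonempty ∧ (∀ a ∈ S, ∀ b ∈ NN 1, subV 1 b a → b ∈ S) ∧ S ≠ NN 1 := by
  have h : S ∈ Finset.univ.filter (fun S : Finset (V 1) =>
      S ⊆ NN 1 ∧ S.Nonempty ∧ (∀ a ∈ S, ∀ b ∈ NN 1, subV 1 b a → b ∈ S) ∧ S ≠ NN 1) := hS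
  rw [Finset.mem_filter] at h
  exact h.2

lemma NN2_maps {S : V 2} (h : S ∈ NN 2) : (AS S, DS S) ∈ F16 := by
  obtain ⟨h1, h2, h3, h4⟩ := mem_NN2 h
  refine Finset.mem_filter.mpr ⟨Finset.mem_univ _, ?_, ?_, ?_⟩
  · intro x hx y hy
    have hx' : ({x}ᶜ : Finset (Fin 3)) ∈ S := (Finset.mem_filter.mp hx).2
    have hyS : ({y} : Finset (Fin 3)) ∈ S := h3 _ hx' _ (L1 y) (L3 x y hy)
    exact Finset.mem_filter.mpr ⟨Finset.mem_univ _, hyS⟩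
  · obtain ⟨a, ha⟩ := h2
    obtain ⟨y, hy⟩ := L4 a (h1 ha)
    have hyS : ({y} : Finset (Fin 3)) ∈ S := h3 a ha _ (L1 y) hy
    exact ⟨y, Finset.mem_filter.mpr ⟨Finset.mem_univ _, hyS⟩⟩
  · rintro ⟨hA, hD⟩
    apply h4
    apply Finset.Subset.antisymm h1
    intro b hb
    rcases L5 b hb with ⟨x, rfl⟩ | ⟨x, rfl⟩
    · have hx : x ∈ AS S := by
        rw [show AS S = Finset.univ from hA]; exact Finset.mem_univ x
      exact (Finset.mem_filter.mp hx).2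
    · have hx : x ∈ DS S := by
        rw [show DS S = Finset.univ from hD]; exact Finset.mem_univ x
      exact (Finset.mem_filter.mp hx).2

lemma NN2_inj : Set.InjOn (fun S => (AS S, DS S)) ↑(NN 2) := by
  have key : ∀ T T' : V 2, T ⊆ NN 1 → AS T = AS T' → DS T = DS T' → T ⊆ T' := by
    intro T T' hT hA hD b hb
    rcases L5 b (hT hb) with ⟨x, rfl⟩ | ⟨x, rfl⟩
    · have hx : x ∈ AS T := Finset.mem_filter.mpr ⟨Finset.mem_univ _, hb⟩
      rw [hA] at hx
      exact (Finset.mem_filter.mp hx).2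
    · have hx : x ∈ DS T := Finset.mem_filter.mpr ⟨Finset.mem_univ _, hb⟩
      rw [hD] at hx
      exact (Finset.mem_filter.mp hx).2
  intro S hS S' hS' he
  rw [Finset.mem_coe] at hS hS'
  have hA : AS S = AS S' := congrArg Prod.fst he
  have hD : DS S = DS S' := congrArg Prod.snd he
  exact Finset.Subset.antisymm (key S S' (mem_NN2 hS).1 hA hD)
    (key S' S (mem_NN2 hS').1 hA.symm hD.symm)

lemma NN2_card_le : (NN 2).card ≤ 16 := by
  have h := Finset.card_le_card_of_injOn (fun S => (AS S, DS S))
    (fun S hS => NN2_maps hS) NN2_inj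
  rwa [F16_card] at h

def P2 : V 2 := {({0} : Finset (Fin 3))}
def Q2 : V 2 := {({0} : Finset (Fin 3)), ({1} : Finset (Fin 3))}

lemma P2_mem : P2 ∈ NN 2 := by
  have h : P2 ∈ Finset.univ.filter (fun S : Finset (V 1) =>
      S ⊆ NN 1 ∧ S.Nonempty ∧ (∀ a ∈ S, ∀ b ∈ NN 1, subV 1 b a → b ∈ S) ∧ S ≠ NN 1) :=
    Finset.mem_filter.mpr ⟨Finset.mem_univ _, by decide, by decide, by decide, by decide⟩
  exact h

lemma Q2_mem : Q2 ∈ NN 2 := by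
  have h : Q2 ∈ Finset.univ.filter (fun S : Finset (V 1) =>
      S ⊆ NN 1 ∧ S.Nonempty ∧ (∀ a ∈ S, ∀ b ∈ NN 1, subV 1 b a → b ∈ S) ∧ S ≠ NN 1) :=
    Finset.mem_filter.mpr ⟨Finset.mem_univ _, by decide, by decide, by decide, by decide⟩
  exact h

lemma P2_ne_Q2 : P2 ≠ Q2 := by decide

lemma P2_sub_Q2 : subV 2 P2 Q2 := by decide

lemma no_t2 {n : ℕ} (hn : n = 16) (B₀ : (Fin 1 → Fin n) → V 2)
    (hG : Good n 0 2 B₀) (hV : Vals n 0 2 B₀) : False := by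
  subst hn
  set g : Fin 16 → V 2 := fun u => B₀ (fun _ => u) with hg
  have hmem : ∀ u, g u ∈ NN 2 := fun u => hV _ (fun i => i.elim0)
  have hpair : ∀ u v : Fin 16, u ≠ v → ¬ subV 2 (g u) (g v) :=
    fun u v huv => pair_prop hG huv
  have hinj : Function.Injective g := by
    intro u v huv
    by_contra hne
    exact hpair u v hne (huv ▸ subV_refl 2 (g u))
  set img := Finset.image g Finset.univ with himg
  have hsub : img ⊆ NN 2 := by
    intro a ha
    obtain ⟨u, -, rfl⟩ := Finset.mem_image.mp ha
    exact hmem u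
  have hcard : img.card = 16 := by
    rw [himg, Finset.card_image_of_injective _ hinj, Finset.card_univ, Fintype.card_fin]
  have heq : img = NN 2 := Finset.eq_of_subset_of_card_le hsub (by rw [hcard]; exact NN2_card_le)
  have hP : P2 ∈ img := by rw [heq]; exact P2_mem
  have hQ : Q2 ∈ img := by rw [heq]; exact Q2_mem
  obtain ⟨u, -, hu⟩ := Finset.mem_image.mp hP
  obtain ⟨v, -, hv⟩ := Finset.mem_image.mp hQ
  have huv : u ≠ v := by
    intro e
    exact P2_ne_Q2 (hu ▸ hv ▸ (congrArg g e))
  apply hpair u v huv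
  rw [hu, hv]
  exact P2_sub_Q2


/- ## Cardinality bound for higher levels -/

lemma NN_mem_unpack {i : ℕ} {S : V (i+1)} (hS : S ∈ NN (i+1)) :
    S ⊆ NN i ∧ S.Nonempty ∧ S ≠ NN i := by
  rw [NN, Finset.mem_filter] at hS
  exact ⟨hS.2.1, hS.2.2.1, hS.2.2.2.2⟩

lemma NN_card_succ (i : ℕ) : (NN (i+1)).card ≤ 2 ^ (NN i).card - 2 := by
  by_cases hE : (NN i) = ∅
  · have : NN (i+1) = ∅ := by
      rw [Finset.eq_empty_iff_forall_notMem]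
      intro S hS
      obtain ⟨h1, h2, -⟩ := NN_mem_unpack hS
      obtain ⟨a, ha⟩ := h2
      rw [hE] at h1
      exact absurd (h1 ha) (Finset.notMem_empty a)
    simp [this]
  · have hsub : NN (i+1) ⊆ (((NN i).powerset.erase ∅).erase (NN i)) := by
      intro S hS
      obtain ⟨h1, h2, h3⟩ := NN_mem_unpack hS
      rw [Finset.mem_erase, Finset.mem_erase, Finset.mem_powerset]
      exact ⟨h3, h2.ne_empty, h1⟩
    have hc := Finset.card_le_card hsub
    rw [Finset.card_erase_of_mem, Finset.card_erase_of_mem, Finset.card_powerset] at hc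
    · have h2 : 1 ≤ 2 ^ (NN i).card := Nat.one_le_two_pow
      omega
    · exact Finset.empty_mem_powerset _
    · exact Finset.mem_erase.mpr ⟨hE, Finset.mem_powerset_self _⟩

lemma tpow_succ (i : ℕ) : tpow (i+1) = 2 ^ tpow i := rfl

lemma NN_bound : ∀ m : ℕ, (NN (m+3)).card ≤ tpow (m+4) - 2 := by
  intro m
  induction m with
  | zero =>
    show (NN 3).card ≤ tpow 4 - 2
    have h1 : (NN 3).card ≤ 2 ^ (NN 2).card - 2 := NN_card_succ 2
    have h2 : (2:ℕ) ^ (NN 2).card ≤ 2 ^ 16 :=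
      Nat.pow_le_pow_right (by norm_num) NN2_card_le
    have h3 : tpow 4 = 65536 := by norm_num [tpow]
    omega
  | succ m ih =>
    show (NN (m+4)).card ≤ tpow (m+5) - 2
    have h1 : (NN (m+4)).card ≤ 2 ^ (NN (m+3)).card - 2 := NN_card_succ (m+3)
    have h2 : (2:ℕ) ^ (NN (m+3)).card ≤ 2 ^ (tpow (m+4) - 2) :=
      Nat.pow_le_pow_right (by norm_num) ih
    have h3 : (2:ℕ) ^ (tpow (m+4) - 2) ≤ 2 ^ tpow (m+4) :=
      Nat.pow_le_pow_right (by norm_num) (Nat.sub_le _ _)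
    have h4 : tpow (m+5) = 2 ^ tpow (m+4) := rfl
    omega

lemma tpow_two_le : ∀ m : ℕ, 1 ≤ m → 2 ≤ tpow m := by
  intro m hm
  induction m with
  | zero => omega
  | succ m _ =>
    have h1 : 1 ≤ tpow m := by
      induction m with
      | zero => norm_num [tpow]
      | succ k _ => exact Nat.one_le_two_pow
    calc 2 = 2 ^ 1 := rfl
    _ ≤ 2 ^ tpow m := Nat.pow_le_pow_right (by norm_num) h1
    _ = tpow (m+1) := rfl

lemma tpow_four_le {m : ℕ} (hm : 2 ≤ m) : 4 ≤ tpow m := by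
  obtain ⟨k, rfl⟩ : ∃ k, m = k + 2 := ⟨m - 2, by omega⟩
  have h1 : 2 ≤ tpow (k+1) := tpow_two_le (k+1) (by omega)
  calc 4 = 2 ^ 2 := rfl
  _ ≤ 2 ^ tpow (k+1) := Nat.pow_le_pow_right (by norm_num) h1
  _ = tpow (k+2) := rfl

/- ## The main impossibility result -/

theorem noAlg (t : ℕ) (ht : 1 ≤ t) : ¬ ∃ B, IsOneSided (tpow (t+1)) 3 t B := by
  rintro ⟨B, hB⟩
  have hn : 2 ≤ tpow (t+1) := tpow_two_le (t+1) (by omega)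
  obtain ⟨B₀, hG, hV⟩ := reduced hn B hB
  match t, ht with
  | 1, _ => exact no_t1 (by norm_num [tpow]) B₀ hG hV
  | 2, _ => exact no_t2 (by norm_num [tpow]) B₀ hG hV
  | (m+3), _ =>
    set g : Fin (tpow (m+4)) → V (m+3) := fun u => B₀ (fun _ => u) with hg
    have hmem : ∀ u, g u ∈ NN (m+3) := fun u => hV _ (fun i => i.elim0)
    have hpair : ∀ u v, u ≠ v → ¬ subV (m+3) (g u) (g v) :=
      fun u v huv => pair_prop hG huv
    have hinj : Set.InjOn g ↑(Finset.univ : Finset (Fin (tpow (m+4)))) := by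
      intro u _ v _ huv
      by_contra hne
      exact hpair u v hne (huv ▸ subV_refl (m+3) (g u))
    have hcard := Finset.card_le_card_of_injOn g (fun u _ => hmem u) hinj
    rw [Finset.card_univ, Fintype.card_fin] at hcard
    have hb := NN_bound m
    have h4 : 4 ≤ tpow (m+4) := tpow_four_le (by omega)
    omega


/- ## Monotonicity in the number of rounds -/

lemma mono {n c t : ℕ} (B : (Fin (t+1) → Fin n) → Fin c) (hB : IsOneSided n c t B) :
    ∃ B' : (Fin (t+1+1) → Fin n) → Fin c, IsOneSided n c (t+1) B' := by
  refine ⟨fun z => B (fun j => z j.castSucc), ?_⟩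
  intro x hx
  have hz : ∀ i : Fin (t+1), x i.castSucc.castSucc ≠ x i.castSucc.succ :=
    fun i => hx i.castSucc
  have h := hB (fun j => x j.castSucc) (fun i => by
    simpa using hz i)
  simpa using h

lemma lift (n c : ℕ) : ∀ d t : ℕ, (∃ B, IsOneSided n c t B) →
    ∃ B' : (Fin (t+d+1) → Fin n) → Fin c, IsOneSided n c (t+d) B' := by
  intro d
  induction d with
  | zero => intro t h; exact h
  | succ d ih =>
    intro t h
    obtain ⟨B, hB⟩ := ih t h
    exact mono B hB

/- ## Existence of one-sided colour reduction to 3 colours -/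

def avoidF (m : ℕ) (hm : 3 ≤ m) (a c : Fin (m+1)) : Fin m :=
  if a.val ≠ 0 ∧ c.val ≠ 0 then ⟨0, by omega⟩
  else if a.val ≠ 1 ∧ c.val ≠ 1 then ⟨1, by omega⟩
  else ⟨2, by omega⟩

lemma avoidF_spec (m : ℕ) (hm : 3 ≤ m) (a c : Fin (m+1)) :
    (avoidF m hm a c).val ≠ a.val ∧ (avoidF m hm a c).val ≠ c.val := by
  unfold avoidF
  split_ifs with h1 h2
  · simp only; omega
  · simp only
    rcases not_and_or.mp h1 with h | h <;> (rw [not_not] at h; omega)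
  · simp only
    rcases not_and_or.mp h1 with h | h <;> rcases not_and_or.mp h2 with h' | h' <;>
      (rw [not_not] at h h'; omega)

def redF (m : ℕ) (hm : 3 ≤ m) (a b c : Fin (m+1)) : Fin m :=
  if hb : b = Fin.last m then avoidF m hm a c else b.castPred hb

lemma redF_spec (m : ℕ) (hm : 3 ≤ m) {a b c d : Fin (m+1)}
    (h2 : b ≠ c) (h3 : c ≠ d) :
    redF m hm a b c ≠ redF m hm b c d := by
  unfold redF
  split_ifs with hb hc hc
  · exact absurd (hb.trans hc.symm) h2
  · intro he
    have hv : (avoidF m hm a c).val = (c.castPred hc).val := congrArg Fin.val he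
    rw [Fin.coe_castPred] at hv
    exact (avoidF_spec m hm a c).2 hv
  · intro he
    have hv : (b.castPred hb).val = (avoidF m hm b d).val := congrArg Fin.val he
    rw [Fin.coe_castPred] at hv
    exact (avoidF_spec m hm b d).1 hv.symm
  · intro he
    have hv : (b.castPred hb).val = (c.castPred hc).val := congrArg Fin.val he
    rw [Fin.coe_castPred, Fin.coe_castPred] at hv
    exact h2 (Fin.val_injective hv)

lemma compose {m t : ℕ} (hm : 3 ≤ m) (A : (Fin (t+1) → Fin m) → Fin 3)
    (hA : IsOneSided m 3 t A) :
    ∃ B : (Fin (t+2+1) → Fin (m+1)) → Fin 3, IsOneSided (m+1) 3 (t+2) B := by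
  refine ⟨fun z => A (fun i : Fin (t+1) =>
    redF m hm (z ⟨i.val, by have := i.isLt; omega⟩)
      (z ⟨i.val+1, by have := i.isLt; omega⟩)
      (z ⟨i.val+2, by have := i.isLt; omega⟩)), ?_⟩
  intro x hx
  have xadj : ∀ (v : ℕ) (hv : v + 1 < t + 4),
      x ⟨v, by omega⟩ ≠ x ⟨v+1, hv⟩ := by
    intro v hv
    exact hx ⟨v, by omega⟩
  have hy : ∀ i : Fin (t+1),
      (fun i : Fin (t+2) => redF m hm (x ⟨i.val, by have := i.isLt; omega⟩)
        (x ⟨i.val+1, by have := i.isLt; omega⟩)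
        (x ⟨i.val+2, by have := i.isLt; omega⟩)) i.castSucc ≠
      (fun i : Fin (t+2) => redF m hm (x ⟨i.val, by have := i.isLt; omega⟩)
        (x ⟨i.val+1, by have := i.isLt; omega⟩)
        (x ⟨i.val+2, by have := i.isLt; omega⟩)) i.succ := by
    intro i
    exact redF_spec m hm (xadj (i.val+1) (by have := i.isLt; omega))
      (xadj (i.val+2) (by have := i.isLt; omega))
  have h := hA (fun i : Fin (t+2) => redF m hm (x ⟨i.val, by have := i.isLt; omega⟩)
    (x ⟨i.val+1, by have := i.isLt; omega⟩)
    (x ⟨i.val+2, by have := i.isLt; omega⟩)) hy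
  exact h

lemma exist3' : ∀ d : ℕ, ∃ t : ℕ, ∃ B : (Fin (t+1) → Fin (3+d)) → Fin 3,
    IsOneSided (3+d) 3 t B := by
  intro d
  induction d with
  | zero =>
    refine ⟨0, fun w => w 0, ?_⟩
    intro x hx
    exact hx 0
  | succ d ih =>
    obtain ⟨t, A, hA⟩ := ih
    obtain ⟨B, hB⟩ := compose (by omega) A hA
    exact ⟨t+2, B, hB⟩

lemma exist3 (m : ℕ) (hm : 3 ≤ m) : ∃ t : ℕ, ∃ B : (Fin (t+1) → Fin m) → Fin 3,
    IsOneSided m 3 t B := by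
  obtain ⟨d, rfl⟩ : ∃ d, m = 3 + d := ⟨m - 3, by omega⟩
  exact exist3' d

end Stmt17Aux

/-- For every `h > 1`, `T(2↑↑h, 3) ≥ h`: there is no one-sided colour reduction
algorithm from `2↑↑h` colours to `3` colours running in `h − 1` rounds. -/
theorem stmt_17 (h : ℕ) (hh : 1 < h) :
    h ≤ T (tpow h) 3 ∧ ¬ ∃ B, IsOneSided (tpow h) 3 (h - 1) B := by
  have hkey : ¬ ∃ B, IsOneSided (tpow h) 3 (h - 1) B := by
    have hno := Stmt17Aux.noAlg (h-1) (by omega)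
    have he : tpow (h-1+1) = tpow h := by rw [show h-1+1 = h by omega]
    rwa [he] at hno
  refine ⟨?_, hkey⟩
  unfold T
  apply le_csInf
  · obtain ⟨t, B, hB⟩ := Stmt17Aux.exist3 (tpow h)
      (by have := Stmt17Aux.tpow_four_le (show 2 ≤ h by omega); omega)
    exact ⟨t, B, hB⟩
  · rintro b ⟨B, hB⟩
    by_contra hb
    push_neg at hb
    have hlift := Stmt17Aux.lift (tpow h) 3 (h-1-b) b ⟨B, hB⟩
    obtain ⟨B', hB'⟩ := hlift
    have hex : ∃ B'', IsOneSided (tpow h) 3 (b + (h-1-b)) B'' := ⟨B', hB'⟩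
    rw [show b + (h-1-b) = h-1 by omega] at hex
    exact hkey hex
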